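/- Suppose a mixture model trained on t tasks has K = t components, so that the source distribution of each task is refined exactly once (no repeated retraining). For each task i ∈ {1, …, t}, let μ_i be the marginal of the target distribution with true labeling function f_i : X → Y, let ν_i be the marginal of its once-refined source distribution with labeling function g_i : X → Y, let h_i ∈ H minimize R(·, μ_i, f_i) over H, and let h̃_i ∈ H minimize R(·, ν_i, g_i) over H. Then for every classifier h ∈ H, the total accumulated error of the mixture model satisfies Σ_{i=1}^{t} R(h, μ_i, f_i) ≤ Σ_{i=1}^{t} [ R'(h, h̃_i, ν_i) + Ψ(μ_i, ν_i) + σ_i ], where σ_i = R'(f_i, h_i, μ_i) + R'(h_i, h̃_i, ν_i); in particular no forgetting error accumulates across tasks. -/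

import Mathlib

/-!
For each task separately: the triangle inequality through the best target hypothesis `h_i`
gives `R(h, μ_i, f_i) ≤ R'(h, h_i, μ_i) + R'(f_i, h_i, μ_i)`; since `h, h_i ∈ H`, the
discrepancy moves the first term to the source,
`R'(h, h_i, μ_i) ≤ R'(h, h_i, ν_i) + Ψ(μ_i, ν_i)`; and a second triangle inequality through
`h̃_i` splits `R'(h, h_i, ν_i)`. Summing these per-task bounds gives the claim: every task is
compared only with its own once-refined source.
-/

open MeasureTheory Finset

/-- `R'(f, g, μ) = ∫ τ(f(x), g(x)) dμ(x)`. -/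
noncomputable def Rp {X Y : Type*} [MeasurableSpace X] (τ : Y → Y → ℝ)
    (f g : X → Y) (μ : Measure X) : ℝ := ∫ x, τ (f x) (g x) ∂μ

/-- Discrepancy distance `Ψ(μ, ν)` w.r.t. loss `τ` and hypothesis class `H`. -/
noncomputable def disc {X Y : Type*} [MeasurableSpace X] (τ : Y → Y → ℝ)
    (H : Set (X → Y)) (μ ν : Measure X) : ℝ :=
  sSup {r : ℝ | ∃ h ∈ H, ∃ h' ∈ H,
    r = |(∫ x, τ (h' x) (h x) ∂μ) - ∫ x, τ (h' x) (h x) ∂ν|}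

section Risk

variable {X Y : Type*} [MeasurableSpace X] {τ : Y → Y → ℝ} {p q r : X → Y}
  {μ ν : Measure X}

theorem integrable_loss_of_bounded {M : ℝ} (hbd : ∀ y y' : Y, |τ y y'| ≤ M)
    [IsFiniteMeasure μ] (hm : Measurable fun x => τ (p x) (q x)) :
    Integrable (fun x => τ (p x) (q x)) μ :=
  (integrable_const M).mono' hm.aestronglyMeasurable (.of_forall fun _ => hbd _ _)

theorem Rp_comm (hsym : ∀ y y' : Y, τ y y' = τ y' y) : Rp τ p q μ = Rp τ q p μ :=
  integral_congr_ae (.of_forall fun _ => hsym _ _)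

theorem Rp_le_add (hnonneg : ∀ y y' : Y, 0 ≤ τ y y')
    (htri : ∀ y y' y'' : Y, τ y y'' ≤ τ y y' + τ y' y'')
    (hpq : Integrable (fun x => τ (p x) (q x)) μ)
    (hqr : Integrable (fun x => τ (q x) (r x)) μ) :
    Rp τ p r μ ≤ Rp τ p q μ + Rp τ q r μ := by
  rw [Rp, Rp, Rp, ← integral_add hpq hqr]
  exact integral_mono_of_nonneg (.of_forall fun _ => hnonneg _ _) (hpq.add hqr)
    (.of_forall fun _ => htri _ _ _)

theorem abs_Rp_sub_Rp_le_disc {M : ℝ} (hbd : ∀ y y' : Y, |τ y y'| ≤ M)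
    [IsFiniteMeasure μ] [IsFiniteMeasure ν] {H : Set (X → Y)} (hp : p ∈ H) (hq : q ∈ H) :
    |Rp τ p q μ - Rp τ p q ν| ≤ disc τ H μ ν := by
  have hRp_le (m : Measure X) [IsFiniteMeasure m] (p' q' : X → Y) :
      |Rp τ p' q' m| ≤ M * m.real Set.univ := by
    rw [Rp, ← Real.norm_eq_abs]
    exact norm_integral_le_of_norm_le_const (.of_forall fun _ => hbd _ _)
  refine le_csSup ⟨M * μ.real Set.univ + M * ν.real Set.univ, ?_⟩ ⟨q, hq, p, hp, rfl⟩
  rintro _ ⟨q', -, p', -, rfl⟩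
  exact (abs_sub _ _).trans (add_le_add (hRp_le μ p' q') (hRp_le ν p' q'))

theorem Rp_le_Rp_source_add_disc {M : ℝ} (hnonneg : ∀ y y' : Y, 0 ≤ τ y y')
    (hbd : ∀ y y' : Y, |τ y y'| ≤ M)
    (hsym : ∀ y y' : Y, τ y y' = τ y' y)
    (htri : ∀ y y' y'' : Y, τ y y'' ≤ τ y y' + τ y' y'')
    [IsFiniteMeasure μ] [IsFiniteMeasure ν] {H : Set (X → Y)} {h h₁ h₂ f : X → Y}
    (hhH : h ∈ H) (h₁H : h₁ ∈ H)
    (hhh₁ : Integrable (fun x => τ (h x) (h₁ x)) μ)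
    (hh₁f : Integrable (fun x => τ (h₁ x) (f x)) μ)
    (hhh₂ : Integrable (fun x => τ (h x) (h₂ x)) ν)
    (hh₂h₁ : Integrable (fun x => τ (h₂ x) (h₁ x)) ν) :
    Rp τ h f μ ≤ Rp τ h h₂ ν + disc τ H μ ν + (Rp τ f h₁ μ + Rp τ h₁ h₂ ν) := by
  have htarget := Rp_le_add hnonneg htri hhh₁ hh₁f
  have htransfer :=
    (abs_sub_le_iff.1 (abs_Rp_sub_Rp_le_disc hbd (μ := μ) (ν := ν) hhH h₁H)).1
  have hsource := Rp_le_add hnonneg htri hhh₂ hh₂h₁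
  rw [Rp_comm hsym (p := h₁) (q := f)] at htarget
  rw [Rp_comm hsym (p := h₂) (q := h₁)] at hsource
  linarith

end Risk

theorem mixture_no_forgetting_bound_general {X Y : Type*} [MeasurableSpace X]
    (τ : Y → Y → ℝ) (M' : ℝ)
    (hbd : ∀ y y' : Y, 0 ≤ τ y y' ∧ τ y y' ≤ M')
    (hsym : ∀ y y' : Y, τ y y' = τ y' y)
    (htri : ∀ y y' y'' : Y, τ y y'' ≤ τ y y' + τ y' y'')
    (H : Set (X → Y))
    (t : ℕ)
    (μ ν : ℕ → Measure X)
    (hprobμ : ∀ i ∈ Finset.Icc 1 t, IsProbabilityMeasure (μ i))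
    (hprobν : ∀ i ∈ Finset.Icc 1 t, IsProbabilityMeasure (ν i))
    (f g : ℕ → X → Y) (hc htc : ℕ → X → Y)
    (hcH : ∀ i ∈ Finset.Icc 1 t, hc i ∈ H)
    (htcH : ∀ i ∈ Finset.Icc 1 t, htc i ∈ H)
    (hMeas : ∀ p q : X → Y,
      (p ∈ H ∨ (∃ i, p = f i) ∨ (∃ i, p = g i)) →
      (q ∈ H ∨ (∃ i, q = f i) ∨ (∃ i, q = g i)) →
      Measurable fun x => τ (p x) (q x))
    (h : X → Y) (hhH : h ∈ H) :
    ∑ i ∈ Finset.Icc 1 t, Rp τ h (f i) (μ i) ≤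
      ∑ i ∈ Finset.Icc 1 t,
        (Rp τ h (htc i) (ν i) + disc τ H (μ i) (ν i) +
          (Rp τ (f i) (hc i) (μ i) + Rp τ (hc i) (htc i) (ν i))) := by
  refine Finset.sum_le_sum fun i hi => ?_
  have := hprobμ i hi
  have := hprobν i hi
  have hnonneg y y' := (hbd y y').1
  have habs y y' : |τ y y'| ≤ M' := (abs_of_nonneg (hnonneg y y')).trans_le (hbd y y').2
  have hint {p q : X → Y} (hp : p ∈ H ∨ (∃ i, p = f i) ∨ (∃ i, p = g i))
      (hq : q ∈ H ∨ (∃ i, q = f i) ∨ (∃ i, q = g i)) {m : Measure X} [IsFiniteMeasure m] :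
      Integrable (fun x => τ (p x) (q x)) m :=
    integrable_loss_of_bounded habs (hMeas p q hp hq)
  exact Rp_le_Rp_source_add_disc hnonneg habs hsym htri hhH (hcH i hi)
    (hint (.inl hhH) (.inl (hcH i hi))) (hint (.inl (hcH i hi)) (.inr (.inl ⟨i, rfl⟩)))
    (hint (.inl hhH) (.inl (htcH i hi))) (hint (.inl (htcH i hi)) (.inl (hcH i hi)))

/-- Lemma 2: risk bound for the mixture model with `K = t` components,
so each task's source distribution is refined exactly once and no forgetting error
accumulates across tasks. -/
theorem mixture_no_forgetting_bound {X Y : Type*} [MeasurableSpace X]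
    (τ : Y → Y → ℝ) (M' : ℝ) (hM : 0 < M')
    (hbd : ∀ y y' : Y, 0 ≤ τ y y' ∧ τ y y' ≤ M')
    (hsym : ∀ y y' : Y, τ y y' = τ y' y)
    (htri : ∀ y y' y'' : Y, τ y y'' ≤ τ y y' + τ y' y'')
    (H : Set (X → Y)) (hH : H.Nonempty)
    (t : ℕ) (ht : 1 ≤ t)
    (μ ν : ℕ → Measure X)
    (hprobμ : ∀ i ∈ Finset.Icc 1 t, IsProbabilityMeasure (μ i))
    (hprobν : ∀ i ∈ Finset.Icc 1 t, IsProbabilityMeasure (ν i))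
    (f g : ℕ → X → Y) (hc htc : ℕ → X → Y)
    (hcH : ∀ i ∈ Finset.Icc 1 t, hc i ∈ H)
    (hcMin : ∀ i ∈ Finset.Icc 1 t, ∀ h' ∈ H,
      Rp τ (hc i) (f i) (μ i) ≤ Rp τ h' (f i) (μ i))
    (htcH : ∀ i ∈ Finset.Icc 1 t, htc i ∈ H)
    (htcMin : ∀ i ∈ Finset.Icc 1 t, ∀ h' ∈ H,
      Rp τ (htc i) (g i) (ν i) ≤ Rp τ h' (g i) (ν i))
    (hMeas : ∀ p q : X → Y,
      (p ∈ H ∨ (∃ i, p = f i) ∨ (∃ i, p = g i)) →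
      (q ∈ H ∨ (∃ i, q = f i) ∨ (∃ i, q = g i)) →
      Measurable fun x => τ (p x) (q x))
    (h : X → Y) (hhH : h ∈ H) :
    ∑ i ∈ Finset.Icc 1 t, Rp τ h (f i) (μ i) ≤
      ∑ i ∈ Finset.Icc 1 t,
        (Rp τ h (htc i) (ν i) + disc τ H (μ i) (ν i) +
          (Rp τ (f i) (hc i) (μ i) + Rp τ (hc i) (htc i) (ν i))) :=
  mixture_no_forgetting_bound_general τ M' hbd hsym htri H t μ ν hprobμ hprobν f g hc htc hcH htcH
    hMeas h hhH
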